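/- arXiv:1705.03600 — 3 statements merged into one kernel-verified Lean document; each statement's English description precedes it below -/
import Mathlib

section
/- Let a, b, a′, b′ ∈ ℂ with ab ≠ 0, a ≠ ±b, a′b′ ≠ 0, a′ ≠ ±b′. Then the one-dimensional subalgebras ℂ·diag(a,b,−a,−b) and ℂ·diag(a′,b′,−a′,−b′) of sp(4,ℂ) are Sp(4,ℂ)-conjugate if and only if there exists λ ∈ ℂ∖{0} such that {a,b} = {λa′, λb′} or {a,b} = {λa′, −λb′} (equality of unordered pairs). -/
open Matrix

set_option maxHeartbeats 1000000 in
theorem dummy_true : True := trivial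

noncomputable section
set_option maxHeartbeats 1000000

abbrev M4 : Type := Matrix (Fin 4) (Fin 4) ℂ

/-- The elementary matrix `E i j`. -/
def Eij (i j : Fin 4) : M4 := Matrix.single i j 1

/-- `J = E₁₃ + E₂₄ − E₃₁ − E₄₂`. -/
def J4 : M4 := Eij 0 2 + Eij 1 3 - Eij 2 0 - Eij 3 1

/-- `sp(4,ℂ) = {X : J Xᵀ J = X}`. -/
def sp4 : Set M4 := {X | J4 * Xᵀ * J4 = X}

/-- `Sp(4,ℂ) = {M : M J Mᵀ = J}`. -/
def Sp4 : Set M4 := {M | M * J4 * Mᵀ = J4}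

/-- Two subsets of `sp(4,ℂ)` are `Sp(4,ℂ)`-conjugate if `M 𝔞 M⁻¹ = 𝔟` for some `M ∈ Sp(4,ℂ)`. -/
def SpConj (a b : Set M4) : Prop :=
  ∃ M ∈ Sp4, (fun X => M * X * M⁻¹) '' a = b

lemma J4_eq : J4 = !![0,0,1,0; 0,0,0,1; -1,0,0,0; 0,-1,0,0] := by
  ext i j
  fin_cases i <;> fin_cases j <;>
    simp [J4, Eij, Matrix.single, Matrix.vecHead, Matrix.vecTail]

lemma J4_mul_negJ4 : J4 * (-J4) = 1 := by
  rw [J4_eq]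
  ext i j
  fin_cases i <;> fin_cases j <;>
    simp [Matrix.mul_apply, Fin.sum_univ_four, Matrix.one_apply, Matrix.vecHead, Matrix.vecTail]

lemma sp_right_inv (M : M4) (hM : M ∈ Sp4) : M * (J4 * Mᵀ * (-J4)) = 1 := by
  rw [← Matrix.mul_assoc, ← Matrix.mul_assoc, hM, J4_mul_negJ4]

lemma sp_inv_mul (M : M4) (hM : M ∈ Sp4) : M⁻¹ * M = 1 := by
  have h1 := sp_right_inv M hM
  rw [Matrix.inv_eq_right_inv h1]
  exact mul_eq_one_comm.mp h1

lemma conjSpanAux (M N D D' : M4) (hMN : M * N = 1) (hM : M ∈ Sp4) (μ : ℂ) (hμ : μ ≠ 0)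
    (h : M * D * N = μ • D') :
    SpConj (Submodule.span ℂ {D} : Set M4) (Submodule.span ℂ {D'} : Set M4) := by
  refine ⟨M, hM, ?_⟩
  rw [Matrix.inv_eq_right_inv hMN]
  ext Y
  simp only [Set.mem_image, SetLike.mem_coe, Submodule.mem_span_singleton]
  constructor
  · rintro ⟨X, ⟨c, rfl⟩, rfl⟩
    exact ⟨c * μ, by rw [Matrix.mul_smul, Matrix.smul_mul, h, smul_smul]⟩
  · rintro ⟨c, rfl⟩
    refine ⟨(c * μ⁻¹) • D, ⟨c * μ⁻¹, rfl⟩, ?_⟩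
    rw [Matrix.mul_smul, Matrix.smul_mul, h, smul_smul, mul_assoc, inv_mul_cancel₀ hμ, mul_one]

def Pm : M4 := !![0,1,0,0; 1,0,0,0; 0,0,0,1; 0,0,1,0]
def Sm : M4 := !![1,0,0,0; 0,0,0,-1; 0,0,1,0; 0,1,0,0]
def Sm' : M4 := !![1,0,0,0; 0,0,0,1; 0,0,1,0; 0,-1,0,0]
def Tm : M4 := !![0,1,0,0; 0,0,-1,0; 0,0,0,1; 1,0,0,0]
def Tm' : M4 := !![0,0,0,1; 1,0,0,0; 0,-1,0,0; 0,0,1,0]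

lemma Pm_mul_Pm : Pm * Pm = 1 := by
  ext i j
  fin_cases i <;> fin_cases j <;>
    simp [Pm, Matrix.mul_apply, Fin.sum_univ_four, Matrix.one_apply, Matrix.vecHead, Matrix.vecTail]

lemma Sm_mul_Sm' : Sm * Sm' = 1 := by
  ext i j
  fin_cases i <;> fin_cases j <;>
    simp [Sm, Sm', Matrix.mul_apply, Fin.sum_univ_four, Matrix.one_apply, Matrix.vecHead, Matrix.vecTail]

lemma Tm_mul_Tm' : Tm * Tm' = 1 := by
  ext i j
  fin_cases i <;> fin_cases j <;>
    simp [Tm, Tm', Matrix.mul_apply, Fin.sum_univ_four, Matrix.one_apply, Matrix.vecHead, Matrix.vecTail]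

lemma one_mem_Sp4 : (1 : M4) ∈ Sp4 := by
  show (1 : M4) * J4 * (1 : M4)ᵀ = J4
  simp

lemma Pm_mem_Sp4 : Pm ∈ Sp4 := by
  show Pm * J4 * Pmᵀ = J4
  rw [J4_eq]
  ext i j
  fin_cases i <;> fin_cases j <;>
    simp [Pm, Matrix.mul_apply, Fin.sum_univ_four, Matrix.transpose_apply, Matrix.vecHead, Matrix.vecTail]

lemma Sm_mem_Sp4 : Sm ∈ Sp4 := by
  show Sm * J4 * Smᵀ = J4
  rw [J4_eq]
  ext i j
  fin_cases i <;> fin_cases j <;>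
    simp [Sm, Matrix.mul_apply, Fin.sum_univ_four, Matrix.transpose_apply, Matrix.vecHead, Matrix.vecTail]

lemma Tm_mem_Sp4 : Tm ∈ Sp4 := by
  show Tm * J4 * Tmᵀ = J4
  rw [J4_eq]
  ext i j
  fin_cases i <;> fin_cases j <;>
    simp [Tm, Matrix.mul_apply, Fin.sum_univ_four, Matrix.transpose_apply, Matrix.vecHead, Matrix.vecTail]

theorem stmt_1 (a b a' b' : ℂ) (ha : a ≠ 0) (hb : b ≠ 0) (hab : a ≠ b) (hab' : a ≠ -b)
    (ha' : a' ≠ 0) (hb' : b' ≠ 0) (hab2 : a' ≠ b') (hab2' : a' ≠ -b') :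
    SpConj (Submodule.span ℂ {(Matrix.diagonal ![a, b, -a, -b] : M4)} : Set M4)
        (Submodule.span ℂ {(Matrix.diagonal ![a', b', -a', -b'] : M4)} : Set M4) ↔
      ∃ l : ℂ, l ≠ 0 ∧
        (({a, b} : Set ℂ) = {l * a', l * b'} ∨ ({a, b} : Set ℂ) = {l * a', -(l * b')}) := by
  constructor
  · rintro ⟨M, hM, himg⟩
    set D : M4 := Matrix.diagonal ![a, b, -a, -b] with hD
    set D' : M4 := Matrix.diagonal ![a', b', -a', -b'] with hD'
    have hinv := sp_inv_mul M hM
    have hD'mem : D' ∈ (Submodule.span ℂ {D'} : Set M4) :=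
      Submodule.mem_span_singleton_self D'
    rw [← himg] at hD'mem
    obtain ⟨X, hX, hXeq⟩ := hD'mem
    rw [SetLike.mem_coe, Submodule.mem_span_singleton] at hX
    obtain ⟨c, rfl⟩ := hX
    have hc : c ≠ 0 := by
      rintro rfl
      apply ha'
      have h0 := congrArg (fun X : M4 => X 0 0) hXeq
      simpa [hD', Matrix.diagonal_apply_eq] using h0.symm
    simp only at hXeq
    have h2 : M * (c • D) = D' * M := by
      have h2' := congrArg (fun X : M4 => X * M) hXeq
      rwa [Matrix.mul_assoc (M * (c • D)) M⁻¹ M, hinv, Matrix.mul_one] at h2'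
    have hkey : ∀ i j : Fin 4, M i j * (c * (![a, b, -a, -b]) j)
        = (![a', b', -a', -b']) i * M i j := by
      intro i j
      have h3 := congrFun (congrFun h2 i) j
      rw [hD, hD'] at h3
      rw [show (c • Matrix.diagonal ![a, b, -a, -b] : M4)
            = Matrix.diagonal (c • ![a, b, -a, -b]) by rw [Matrix.diagonal_smul]] at h3
      rw [Matrix.mul_diagonal, Matrix.diagonal_mul] at h3
      simpa using h3
    have hcol : ∀ j : Fin 4, ∃ i, M i j ≠ 0 := by
      intro j
      by_contra hcon
      push_neg at hcon
      have h4 := congrFun (congrFun hinv j) j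
      simp [Matrix.mul_apply, Fin.sum_univ_four, Matrix.one_apply, hcon] at h4
    obtain ⟨i0, hi0⟩ := hcol 0
    obtain ⟨i1, hi1⟩ := hcol 1
    have e0 : c * a = (![a', b', -a', -b']) i0 := by
      have h5 := hkey i0 0
      rw [mul_comm ((![a', b', -a', -b']) i0)] at h5
      have := mul_left_cancel₀ hi0 h5
      simpa using this
    have e1 : c * b = (![a', b', -a', -b']) i1 := by
      have h5 := hkey i1 1
      rw [mul_comm ((![a', b', -a', -b']) i1)] at h5
      have := mul_left_cancel₀ hi1 h5
      simpa using this
    have hcinv : (c⁻¹ : ℂ) ≠ 0 := inv_ne_zero hc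
    fin_cases i0 <;> fin_cases i1 <;>
      simp [Matrix.vecHead, Matrix.vecTail] at e0 e1
    -- i0 = 0
    · exact absurd (mul_left_cancel₀ hc (by linear_combination e0 - e1)) hab
    · refine ⟨c⁻¹, hcinv, Or.inl ?_⟩
      rw [Set.pair_eq_pair_iff]
      exact Or.inl ⟨by field_simp; (first | linear_combination e0 | linear_combination -e0), by field_simp; (first | linear_combination e1 | linear_combination -e1)⟩
    · exact absurd (mul_left_cancel₀ hc (show c * a = c * -b by linear_combination e0 + e1)) hab'
    · refine ⟨c⁻¹, hcinv, Or.inr ?_⟩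
      rw [Set.pair_eq_pair_iff]
      exact Or.inl ⟨by field_simp; (first | linear_combination e0 | linear_combination -e0), by field_simp; (first | linear_combination e1 | linear_combination -e1)⟩
    -- i0 = 1
    · refine ⟨c⁻¹, hcinv, Or.inl ?_⟩
      rw [Set.pair_eq_pair_iff]
      exact Or.inr ⟨by field_simp; (first | linear_combination e0 | linear_combination -e0), by field_simp; (first | linear_combination e1 | linear_combination -e1)⟩
    · exact absurd (mul_left_cancel₀ hc (by linear_combination e0 - e1)) hab
    · refine ⟨-c⁻¹, neg_ne_zero.mpr hcinv, Or.inr ?_⟩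
      rw [Set.pair_eq_pair_iff]
      exact Or.inr ⟨by field_simp; (first | linear_combination e0 | linear_combination -e0), by field_simp; (first | linear_combination e1 | linear_combination -e1)⟩
    · exact absurd (mul_left_cancel₀ hc (show c * a = c * -b by linear_combination e0 + e1)) hab'
    -- i0 = 2
    · exact absurd (mul_left_cancel₀ hc (show c * a = c * -b by linear_combination e0 + e1)) hab'
    · refine ⟨-c⁻¹, neg_ne_zero.mpr hcinv, Or.inr ?_⟩
      rw [Set.pair_eq_pair_iff]
      exact Or.inl ⟨by field_simp; (first | linear_combination e0 | linear_combination -e0), by field_simp; (first | linear_combination e1 | linear_combination -e1)⟩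
    · exact absurd (mul_left_cancel₀ hc (by linear_combination e0 - e1)) hab
    · refine ⟨-c⁻¹, neg_ne_zero.mpr hcinv, Or.inl ?_⟩
      rw [Set.pair_eq_pair_iff]
      exact Or.inl ⟨by field_simp; (first | linear_combination e0 | linear_combination -e0), by field_simp; (first | linear_combination e1 | linear_combination -e1)⟩
    -- i0 = 3
    · refine ⟨c⁻¹, hcinv, Or.inr ?_⟩
      rw [Set.pair_eq_pair_iff]
      exact Or.inr ⟨by field_simp; (first | linear_combination e0 | linear_combination -e0), by field_simp; (first | linear_combination e1 | linear_combination -e1)⟩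
    · exact absurd (mul_left_cancel₀ hc (show c * a = c * -b by linear_combination e0 + e1)) hab'
    · refine ⟨-c⁻¹, neg_ne_zero.mpr hcinv, Or.inl ?_⟩
      rw [Set.pair_eq_pair_iff]
      exact Or.inr ⟨by field_simp; (first | linear_combination e0 | linear_combination -e0), by field_simp; (first | linear_combination e1 | linear_combination -e1)⟩
    · exact absurd (mul_left_cancel₀ hc (by linear_combination e0 - e1)) hab
  · rintro ⟨l, hl, hcase⟩
    rcases hcase with h | h <;> rw [Set.pair_eq_pair_iff] at h
    · rcases h with ⟨h1, h2⟩ | ⟨h1, h2⟩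
      · subst h1; subst h2
        refine conjSpanAux 1 1 _ _ (by rw [Matrix.mul_one]) one_mem_Sp4 l hl ?_
        rw [Matrix.one_mul, Matrix.mul_one]
        ext i j
        fin_cases i <;> fin_cases j <;>
          simp [Matrix.diagonal_apply, Matrix.smul_apply, smul_eq_mul,
            Matrix.vecHead, Matrix.vecTail]
      · subst h1; subst h2
        refine conjSpanAux Pm Pm _ _ Pm_mul_Pm Pm_mem_Sp4 l hl ?_
        ext i j
        fin_cases i <;> fin_cases j <;>
          simp [Pm, Matrix.mul_apply, Matrix.vecMul, dotProduct, Fin.sum_univ_four,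
            Matrix.diagonal_apply, Matrix.smul_apply, smul_eq_mul,
            Matrix.vecHead, Matrix.vecTail]
    · rcases h with ⟨h1, h2⟩ | ⟨h1, h2⟩
      · subst h1; subst h2
        refine conjSpanAux Sm Sm' _ _ Sm_mul_Sm' Sm_mem_Sp4 l hl ?_
        ext i j
        fin_cases i <;> fin_cases j <;>
          simp [Sm, Sm', Matrix.mul_apply, Matrix.vecMul, dotProduct, Fin.sum_univ_four,
            Matrix.diagonal_apply, Matrix.smul_apply, smul_eq_mul,
            Matrix.vecHead, Matrix.vecTail]
      · subst h1; subst h2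
        refine conjSpanAux Tm Tm' _ _ Tm_mul_Tm' Tm_mem_Sp4 l hl ?_
        ext i j
        fin_cases i <;> fin_cases j <;>
          simp [Tm, Tm', Matrix.mul_apply, Matrix.vecMul, dotProduct, Fin.sum_univ_four,
            Matrix.diagonal_apply, Matrix.smul_apply, smul_eq_mul,
            Matrix.vecHead, Matrix.vecTail]
end
end

section
/- Let a, b ∈ ℂ∖{0}. The one-dimensional subalgebras ℂ·(H, aH) and ℂ·(H, bH) of 𝔤 = sl(2,ℂ) ⊕ sl(2,ℂ) are conjugate under SL(2,ℂ) × SL(2,ℂ) if and only if a = b or a = −b. -/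
open Matrix

noncomputable section

abbrev M2 : Type := Matrix (Fin 2) (Fin 2) ℂ

/-- `𝔤 = sl(2,ℂ) ⊕ sl(2,ℂ)` lives inside the product algebra `M2 × M2`
(with componentwise commutator bracket). -/
abbrev gP : Type := M2 × M2

/-- `H = diag(1,−1)`. -/
def H2 : M2 := Matrix.diagonal ![1, -1]

/-- `E = E₁₂`. -/
def E2 : M2 := Matrix.single 0 1 1

/-- `sl(2,ℂ) ⊕ sl(2,ℂ)` as a subset of `M2 × M2`: pairs of traceless matrices. -/
def sl2sl2 : Set gP := {p | Matrix.trace p.1 = 0 ∧ Matrix.trace p.2 = 0}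

/-- `SL(2,ℂ) = {M : det M = 1}`. -/
def SL2 : Set M2 := {M | M.det = 1}

/-- Conjugacy of subsets of `𝔤` under `SL(2,ℂ) × SL(2,ℂ)`, acting by
`(M,N)·(x,y) = (M x M⁻¹, N y N⁻¹)`. -/
def PConj (a b : Set gP) : Prop :=
  ∃ M ∈ SL2, ∃ N ∈ SL2, (fun p : gP => (M * p.1 * M⁻¹, N * p.2 * N⁻¹)) '' a = b

lemma detH2 : H2.det = -1 := by
  simp [H2, Matrix.det_diagonal, Fin.prod_univ_two]

lemma img_span (M N x y : M2) :
    (fun p : gP => (M * p.1 * M⁻¹, N * p.2 * N⁻¹)) ''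
      (Submodule.span ℂ {((x, y) : gP)} : Set gP)
    = (Submodule.span ℂ {((M * x * M⁻¹, N * y * N⁻¹) : gP)} : Set gP) := by
  ext p
  simp only [Set.mem_image, SetLike.mem_coe, Submodule.mem_span_singleton]
  constructor
  · rintro ⟨q, ⟨c, rfl⟩, rfl⟩
    refine ⟨c, ?_⟩
    simp [Prod.smul_mk, mul_smul_comm, smul_mul_assoc]
  · rintro ⟨c, rfl⟩
    refine ⟨c • (x, y), ⟨c, rfl⟩, ?_⟩
    simp [Prod.smul_mk, mul_smul_comm, smul_mul_assoc]

def W2 : M2 := !![0, 1; -1, 0]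

lemma W2inv : W2⁻¹ = -W2 := by
  apply Matrix.inv_eq_right_inv
  ext i j
  fin_cases i <;> fin_cases j <;>
    simp [W2, Matrix.mul_apply, Fin.sum_univ_two]

lemma H2eq : H2 = !![1, 0; 0, -1] := by
  ext i j
  fin_cases i <;> fin_cases j <;> simp [H2]

lemma W2conj : W2 * H2 * W2⁻¹ = -H2 := by
  rw [W2inv, H2eq]
  ext i j
  fin_cases i <;> fin_cases j <;>
    simp [W2, Matrix.mul_apply, Fin.sum_univ_two]

theorem stmt_16 (a b : ℂ) (ha : a ≠ 0) (hb : b ≠ 0) :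
    PConj (Submodule.span ℂ {((H2, a • H2) : gP)} : Set gP)
        (Submodule.span ℂ {((H2, b • H2) : gP)} : Set gP) ↔ a = b ∨ a = -b := by
  constructor
  · rintro ⟨M, hM, N, hN, h⟩
    have hmem : ((H2, a • H2) : gP) ∈
        (Submodule.span ℂ {((H2, a • H2) : gP)} : Set gP) :=
      Submodule.mem_span_singleton_self _
    have himg : (M * H2 * M⁻¹, N * (a • H2) * N⁻¹) ∈
        (Submodule.span ℂ {((H2, b • H2) : gP)} : Set gP) := by
      rw [← h]; exact ⟨_, hmem, rfl⟩
    rw [SetLike.mem_coe, Submodule.mem_span_singleton] at himg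
    obtain ⟨c, hc⟩ := himg
    have h1 : c • H2 = M * H2 * M⁻¹ := congrArg Prod.fst hc
    have h2 : c • b • H2 = N * (a • H2) * N⁻¹ := congrArg Prod.snd hc
    have hMinv : M⁻¹.det = 1 := by
      rw [Matrix.det_nonsing_inv, hM]; simp
    have hNinv : N⁻¹.det = 1 := by
      rw [Matrix.det_nonsing_inv, hN]; simp
    have d1 : (c • H2).det = -1 := by
      rw [h1, Matrix.det_mul, Matrix.det_mul, hM, hMinv, detH2]; ring
    have d2 : (c • b • H2).det = -(a ^ 2) := by
      rw [h2, Matrix.det_mul, Matrix.det_mul, hN, hNinv, Matrix.det_smul, detH2]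
      simp
    rw [Matrix.det_smul, detH2] at d1
    rw [smul_smul, Matrix.det_smul, detH2] at d2
    simp only [Fintype.card_fin] at d1 d2
    have hc2 : c ^ 2 = 1 := by linear_combination -d1
    have hab : a ^ 2 = b ^ 2 := by linear_combination d2 + b ^ 2 * hc2
    have : (a - b) * (a + b) = 0 := by linear_combination hab
    rcases mul_eq_zero.mp this with h | h
    · exact Or.inl (sub_eq_zero.mp h)
    · exact Or.inr (eq_neg_of_add_eq_zero_left h)
  · rintro (rfl | rfl)
    · refine ⟨1, by simp [SL2], 1, by simp [SL2], ?_⟩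
      rw [img_span]
      simp
    · refine ⟨1, by simp [SL2], W2, ?_, ?_⟩
      · simp [SL2, W2, Matrix.det_fin_two_of]
      · rw [img_span]
        have : W2 * ((-b) • H2) * W2⁻¹ = b • H2 := by
          rw [mul_smul_comm, smul_mul_assoc, W2conj]
          simp
        rw [this]
        simp
end
end

section
/- Let a, b ∈ ℂ. The two-dimensional subalgebras span{(E, 0), (H, aH)} and span{(E, 0), (H, bH)} of 𝔤 = sl(2,ℂ) ⊕ sl(2,ℂ) are conjugate under SL(2,ℂ) × SL(2,ℂ) if and only if a = b or a = −b. (Each such span is a Lie subalgebra of 𝔤.) -/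
open Matrix

noncomputable section

attribute [local instance 100] LieRing.ofAssociativeRing

/-- `span{(E,0), (H, aH)}`. -/
def Wset (a : ℂ) : Set gP := {((E2, 0) : gP), ((H2, a • H2) : gP)}

/-! ### Auxiliary matrix computations -/

lemma hH2sq : H2 * H2 = 1 := by
  ext i j; fin_cases i <;> fin_cases j <;>
    simp [H2, Matrix.mul_apply, Fin.sum_univ_two, Matrix.one_apply]

lemma hE2sq : E2 * E2 = 0 := by
  ext i j; fin_cases i <;> fin_cases j <;>
    simp [E2, Matrix.mul_apply, Fin.sum_univ_two, Matrix.single]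

lemma hE2H2 : E2 * H2 = -E2 := by
  ext i j; fin_cases i <;> fin_cases j <;>
    simp [H2, E2, Matrix.mul_apply, Fin.sum_univ_two, Matrix.single]

lemma hH2E2 : H2 * E2 = E2 := by
  ext i j; fin_cases i <;> fin_cases j <;>
    simp [H2, E2, Matrix.mul_apply, Fin.sum_univ_two, Matrix.single]

lemma hbr : E2 * H2 - H2 * E2 = (-2 : ℂ) • E2 := by
  ext i j; fin_cases i <;> fin_cases j <;>
    (simp [H2, E2, Matrix.mul_apply, Fin.sum_univ_two, Matrix.single]; try norm_num)

lemma brEH (c : ℂ) : ⁅((E2, 0) : gP), ((H2, c • H2) : gP)⁆ = (-2 : ℂ) • ((E2, 0) : gP) := by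
  show (⁅E2, H2⁆, ⁅(0:M2), c • H2⁆) = _
  rw [Ring.lie_def, Ring.lie_def]
  simp [hbr, Prod.smul_def]

def Nmat : M2 := !![0, 1; -1, 0]

lemma hNdet : Nmat.det = 1 := by simp [Nmat, Matrix.det_fin_two_of]

lemma hNinv : Nmat⁻¹ = !![0, -1; 1, 0] := by
  apply Matrix.inv_eq_right_inv
  ext i j; fin_cases i <;> fin_cases j <;>
    simp [Nmat, Matrix.mul_apply, Fin.sum_univ_two, Matrix.one_apply]

lemma hNH : Nmat * H2 * Nmat⁻¹ = -H2 := by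
  rw [hNinv]
  ext i j; fin_cases i <;> fin_cases j <;>
    simp [Nmat, H2, Matrix.mul_apply, Fin.sum_univ_two, Matrix.vecMul,
      dotProduct, Matrix.diagonal_apply]

/-! ### The span is a Lie subalgebra -/

def Ksub (c : ℂ) : LieSubalgebra ℂ gP :=
  { Submodule.span ℂ (Wset c) with
    lie_mem' := by
      intro x y hx hy
      replace hx : x ∈ Submodule.span ℂ (Wset c) := hx
      replace hy : y ∈ Submodule.span ℂ (Wset c) := hy
      show ⁅x, y⁆ ∈ Submodule.span ℂ (Wset c)
      unfold Wset at *
      rw [Submodule.mem_span_pair] at *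
      obtain ⟨s, t, rfl⟩ := hx
      obtain ⟨s', t', rfl⟩ := hy
      refine ⟨(s * t' - t * s') * (-2), 0, ?_⟩
      simp only [lie_add, add_lie, lie_smul, smul_lie, lie_self, smul_zero, zero_add, add_zero,
        brEH, lie_skew]
      rw [← lie_skew ((H2, c • H2) : gP), brEH]
      simp [smul_smul]
      module }

lemma part1 (c : ℂ) :
    (LieSubalgebra.lieSpan ℂ gP (Wset c) : Set gP) = (Submodule.span ℂ (Wset c) : Set gP) := by
  apply le_antisymm
  · have h1 : LieSubalgebra.lieSpan ℂ gP (Wset c) ≤ Ksub c :=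
      LieSubalgebra.lieSpan_le.mpr Submodule.subset_span
    exact h1
  · intro x hx
    exact Submodule.span_le.mpr
      (LieSubalgebra.subset_lieSpan (R := ℂ) (L := gP) (s := Wset c)) hx

/-! ### Tracelessness -/

lemma traceE2 : Matrix.trace E2 = 0 := by
  simp [E2, Matrix.trace, Fin.sum_univ_two, Matrix.single, Matrix.diag]

lemma traceH2 : Matrix.trace H2 = 0 := by
  simp [H2, Matrix.trace, Fin.sum_univ_two, Matrix.diag]

def Tlin : gP →ₗ[ℂ] ℂ × ℂ :=
  LinearMap.prodMap (Matrix.traceLinearMap (Fin 2) ℂ ℂ) (Matrix.traceLinearMap (Fin 2) ℂ ℂ)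

lemma sl2sl2_eq : sl2sl2 = (LinearMap.ker Tlin : Set gP) := by
  ext p
  simp [sl2sl2, Tlin, Prod.ext_iff, LinearMap.mem_ker]

lemma span_sub_sl (c : ℂ) : (Submodule.span ℂ (Wset c) : Set gP) ⊆ sl2sl2 := by
  rw [sl2sl2_eq]
  refine Submodule.span_le.mpr ?_
  rintro p (rfl | rfl) <;>
    simp [Tlin, Prod.ext_iff, LinearMap.mem_ker, traceE2, traceH2]

/-! ### Conjugation as a linear map -/

def conjMap (M N : M2) : gP →ₗ[ℂ] gP where
  toFun p := (M * p.1 * M⁻¹, N * p.2 * N⁻¹)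
  map_add' p q := by simp [Matrix.mul_add, Matrix.add_mul, Prod.ext_iff]
  map_smul' c p := by simp [Matrix.mul_smul, Matrix.smul_mul, Prod.ext_iff]

lemma conj_span (M N : M2) (S : Set gP) :
    (fun p : gP => (M * p.1 * M⁻¹, N * p.2 * N⁻¹)) '' (Submodule.span ℂ S : Set gP)
      = (Submodule.span ℂ ((conjMap M N) '' S) : Set gP) := by
  have : (fun p : gP => (M * p.1 * M⁻¹, N * p.2 * N⁻¹)) = ⇑(conjMap M N) := rfl
  rw [this, ← Submodule.map_coe, Submodule.map_span]

/-! ### Backward direction -/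

lemma bwd (a b : ℂ) (h : a = b ∨ a = -b) :
    PConj (Submodule.span ℂ (Wset a) : Set gP) (Submodule.span ℂ (Wset b) : Set gP) := by
  rcases h with rfl | rfl
  · refine ⟨1, by simp [SL2], 1, by simp [SL2], ?_⟩
    rw [conj_span]
    ext p
    simp [conjMap, Wset]
  · refine ⟨1, by simp [SL2], Nmat, hNdet, ?_⟩
    rw [conj_span]
    unfold Wset
    rw [Set.image_insert_eq, Set.image_singleton]
    have h1 : conjMap 1 Nmat (E2, 0) = (E2, 0) := by
      simp [conjMap]
    have h2 : conjMap 1 Nmat (H2, (-b) • H2) = (H2, b • H2) := by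
      simp only [conjMap, LinearMap.coe_mk, AddHom.coe_mk]
      have : Nmat * (-b) • H2 * Nmat⁻¹ = (-b) • (Nmat * H2 * Nmat⁻¹) := by
        rw [Matrix.mul_smul, Matrix.smul_mul]
      rw [this, hNH]
      simp
    rw [h1, h2]

/-! ### Forward direction -/

lemma sandwich (M X : M2) (hMl : M⁻¹ * M = 1) (Y : M2) :
    (M * X * M⁻¹) * (M * Y * M⁻¹) = M * (X * Y) * M⁻¹ := by
  calc (M * X * M⁻¹) * (M * Y * M⁻¹) = M * X * (M⁻¹ * M) * Y * M⁻¹ := by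
        simp only [Matrix.mul_assoc]
    _ = M * (X * Y) * M⁻¹ := by rw [hMl, Matrix.mul_one, Matrix.mul_assoc M X Y]

lemma fwd (a b : ℂ)
    (h : PConj (Submodule.span ℂ (Wset a) : Set gP) (Submodule.span ℂ (Wset b) : Set gP)) :
    a = b ∨ a = -b := by
  obtain ⟨M, hM, N, hN, himg⟩ := h
  have hMu : IsUnit M.det := by rw [hM]; exact isUnit_one
  have hNu : IsUnit N.det := by rw [hN]; exact isUnit_one
  have hMl := Matrix.nonsing_inv_mul M hMu
  have hMr := Matrix.mul_nonsing_inv M hMu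
  have hNl := Matrix.nonsing_inv_mul N hNu
  have hNr := Matrix.mul_nonsing_inv N hNu
  have hgen : ((H2, a • H2) : gP) ∈ (Submodule.span ℂ (Wset a) : Set gP) :=
    Submodule.subset_span (by right; rfl)
  have hmem : ((M * H2 * M⁻¹, N * (a • H2) * N⁻¹) : gP) ∈ Submodule.span ℂ (Wset b) := by
    have := himg ▸ Set.mem_image_of_mem _ hgen
    exact this
  unfold Wset at hmem
  rw [Submodule.mem_span_pair] at hmem
  obtain ⟨γ, δ, hgd⟩ := hmem
  have h1 : γ • E2 + δ • H2 = M * H2 * M⁻¹ := congrArg Prod.fst hgd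
  have h2 : δ • (b • H2) = N * (a • H2) * N⁻¹ := by
    have := congrArg Prod.snd hgd
    simpa using this
  have hsq1 : (δ * δ) • (1 : M2) = 1 := by
    calc (δ * δ) • (1 : M2)
        = (γ • E2 + δ • H2) * (γ • E2 + δ • H2) := by
          simp [add_mul, mul_add, Matrix.smul_mul, Matrix.mul_smul, hE2sq, hE2H2, hH2E2,
            hH2sq, smul_smul]
          module
      _ = (M * H2 * M⁻¹) * (M * H2 * M⁻¹) := by rw [h1]
      _ = M * (H2 * H2) * M⁻¹ := sandwich M H2 hMl H2
      _ = 1 := by rw [hH2sq, Matrix.mul_one, hMr]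
  have hδ : δ * δ = 1 := by
    have := congrArg (fun X : M2 => X 0 0) hsq1
    simpa [Matrix.one_apply] using this
  have hsq2 : (δ * δ * (b * b)) • (1 : M2) = (a * a) • (1 : M2) := by
    calc (δ * δ * (b * b)) • (1 : M2)
        = (δ • (b • H2)) * (δ • (b • H2)) := by
          simp [Matrix.smul_mul, Matrix.mul_smul, smul_smul, hH2sq]
          ring_nf
      _ = (N * (a • H2) * N⁻¹) * (N * (a • H2) * N⁻¹) := by rw [h2]
      _ = N * ((a • H2) * (a • H2)) * N⁻¹ := sandwich N _ hNl _
      _ = (a * a) • (1 : M2) := by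
          have hx : (a • H2) * (a • H2) = (a * a) • (1 : M2) := by
            rw [Matrix.smul_mul, Matrix.mul_smul, smul_smul, hH2sq]
          rw [hx, Matrix.mul_smul, Matrix.smul_mul, Matrix.mul_one, hNr]
  have hab : b * b = a * a := by
    have := congrArg (fun X : M2 => X 0 0) hsq2
    simp [Matrix.one_apply, hδ] at this
    simpa [hδ, one_mul] using this
  exact mul_self_eq_mul_self_iff.mp hab.symm

theorem stmt_17 (a b : ℂ) :
    -- each such span is a Lie subalgebra of 𝔤
    (∀ c : ℂ,
      (LieSubalgebra.lieSpan ℂ gP (Wset c) : Set gP) = (Submodule.span ℂ (Wset c) : Set gP) ∧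
      (Submodule.span ℂ (Wset c) : Set gP) ⊆ sl2sl2) ∧
    -- conjugate iff a = b or a = −b
    (PConj (Submodule.span ℂ (Wset a) : Set gP) (Submodule.span ℂ (Wset b) : Set gP) ↔
      a = b ∨ a = -b) := by
  exact ⟨fun c => ⟨part1 c, span_sub_sl c⟩, ⟨fwd a b, bwd a b⟩⟩
end
end
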